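/- Let K be the open triangle in ℝ² with vertices (0,0), (1,0), (1,1), i.e., K = {(x,t) : 0 < t < x < 1}. For every w ∈ C¹(closure of K), the inflow trace τᵢw(x) = w(x,0) satisfies ∫₀¹ x·|τᵢw(x)|² dx ≤ 2(‖w‖²_{L²(K)} + ‖∂ₜw‖²_{L²(K)}). -/

import Mathlib

/-!
Fix `x ∈ (0, 1)` and put `g = w(x, ·)`, so `g' = ∂ₜw(x, ·)` on `[0, x]`. The fundamental theorem
of calculus for `g²` together with `2 g g' ≥ -(g² + g'²)` gives `g(0)² ≤ g(t)² + I(x)` for every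
`t ∈ [0, x]`, where `I(x) = ∫₀ˣ (g² + g'²)`. Averaging over `t` yields
`x g(0)² ≤ (1 + x) I(x) ≤ 2 I(x)`, and integrating in `x` gives the claim, since by Fubini
`∫₀¹ I = ‖w‖²_{L²(K)} + ‖∂ₜw‖²_{L²(K)}` for the triangle `K`, the region between `0` and `id`
over `(0, 1)`.
-/

open MeasureTheory Set

section regionBetween

variable {α E : Type*} {f g : α → ℝ} {s : Set α}

theorem indicator_regionBetween_apply [Zero E] (F : α × ℝ → E) (x : α) (y : ℝ) :
    (regionBetween f g s).indicator F (x, y) =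
      s.indicator (fun x => (Ioo (f x) (g x)).indicator (fun y => F (x, y)) y) x := by
  by_cases hx : x ∈ s <;> by_cases hy : y ∈ Ioo (f x) (g x) <;>
    simp_all [regionBetween, indicator_apply]

variable [NormedAddCommGroup E] [NormedSpace ℝ E]

theorem integral_indicator_regionBetween_slice (F : α × ℝ → E) (x : α) :
    ∫ y, (regionBetween f g s).indicator F (x, y) =
      s.indicator (fun x => ∫ y in Ioo (f x) (g x), F (x, y)) x := by
  simp_rw [indicator_regionBetween_apply]
  by_cases hx : x ∈ s
  · simp [hx, integral_indicator measurableSet_Ioo]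
  · simp [hx]

variable [MeasurableSpace α] {μ : Measure α} {F : α × ℝ → E}

theorem integrableOn_integral_regionBetween (hf : Measurable f) (hg : Measurable g)
    (hs : MeasurableSet s) (hF : IntegrableOn F (regionBetween f g s) (μ.prod volume)) :
    IntegrableOn (fun x => ∫ y in Ioo (f x) (g x), F (x, y)) s μ := by
  rw [← integrable_indicator_iff (measurableSet_regionBetween hf hg hs)] at hF
  have := hF.integral_prod_left
  simp_rw [integral_indicator_regionBetween_slice] at this
  exact (integrable_indicator_iff hs).mp this

theorem setIntegral_regionBetween [SFinite μ] (hf : Measurable f) (hg : Measurable g)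
    (hs : MeasurableSet s) (hF : IntegrableOn F (regionBetween f g s) (μ.prod volume)) :
    ∫ p in regionBetween f g s, F p ∂μ.prod volume =
      ∫ x in s, (∫ y in Ioo (f x) (g x), F (x, y)) ∂μ := by
  rw [← integrable_indicator_iff (measurableSet_regionBetween hf hg hs)] at hF
  rw [← integral_indicator (measurableSet_regionBetween hf hg hs), integral_prod _ hF,
    ← integral_indicator hs]
  simp_rw [integral_indicator_regionBetween_slice]

end regionBetween

section TraceInequality

variable {g g' : ℝ → ℝ} {a b : ℝ}

theorem sq_le_sq_add_integral_sq_add_sq (hab : a ≤ b) (hg : ContinuousOn g (Icc a b))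
    (hg' : ContinuousOn g' (Icc a b)) (hderiv : ∀ s ∈ Ioo a b, HasDerivAt g (g' s) s) :
    g a ^ 2 ≤ g b ^ 2 + ∫ s in a..b, (g s ^ 2 + g' s ^ 2) := by
  have hftc : ∫ s in a..b, 2 * g s * g' s = g b ^ 2 - g a ^ 2 := by
    refine intervalIntegral.integral_eq_sub_of_hasDerivAt_of_le hab (hg.pow 2)
      (fun s hs => ?_) ?_
    · simpa [mul_comm, mul_assoc, mul_left_comm] using (hderiv s hs).pow 2
    · exact ((continuousOn_const.mul hg).mul hg').intervalIntegrable_of_Icc hab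
  have hamgm : -∫ s in a..b, (g s ^ 2 + g' s ^ 2) ≤ ∫ s in a..b, 2 * g s * g' s := by
    rw [← intervalIntegral.integral_neg]
    refine intervalIntegral.integral_mono_on hab ?_ ?_ fun s _ => ?_
    · exact ((hg.pow 2).add (hg'.pow 2)).neg.intervalIntegrable_of_Icc hab
    · exact ((continuousOn_const.mul hg).mul hg').intervalIntegrable_of_Icc hab
    · nlinarith [sq_nonneg (g s + g' s)]
  linarith

theorem mul_sq_le_integral_sq_add_sq (hab : a ≤ b) (hg : ContinuousOn g (Icc a b))
    (hg' : ContinuousOn g' (Icc a b)) (hderiv : ∀ s ∈ Ioo a b, HasDerivAt g (g' s) s) :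
    (b - a) * g a ^ 2 ≤ (1 + (b - a)) * ∫ s in a..b, (g s ^ 2 + g' s ^ 2) := by
  set I := ∫ s in a..b, (g s ^ 2 + g' s ^ 2)
  have hint : IntervalIntegrable (fun s => g s ^ 2 + g' s ^ 2) volume a b :=
    ((hg.pow 2).add (hg'.pow 2)).intervalIntegrable_of_Icc hab
  have hpoint : ∀ t ∈ Icc a b, g a ^ 2 ≤ g t ^ 2 + I := by
    intro t ⟨hat, htb⟩
    have hsub : Icc a t ⊆ Icc a b := Icc_subset_Icc_right htb
    calc g a ^ 2 ≤ g t ^ 2 + ∫ s in a..t, (g s ^ 2 + g' s ^ 2) :=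
          sq_le_sq_add_integral_sq_add_sq hat (hg.mono hsub) (hg'.mono hsub)
            fun s hs => hderiv s (Ioo_subset_Ioo_right htb hs)
      _ ≤ g t ^ 2 + I := by
          gcongr
          exact intervalIntegral.integral_mono_interval le_rfl hat htb
            (ae_of_all _ fun s => by positivity) hint
  have hsq : IntervalIntegrable (fun t => g t ^ 2) volume a b :=
    (hg.pow 2).intervalIntegrable_of_Icc hab
  have hsq_le : ∫ s in a..b, g s ^ 2 ≤ I :=
    intervalIntegral.integral_mono_on hab hsq hint
      fun s _ => le_add_of_nonneg_right (sq_nonneg _)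
  calc (b - a) * g a ^ 2 = ∫ _ in a..b, g a ^ 2 := by simp
    _ ≤ ∫ t in a..b, (g t ^ 2 + I) :=
        intervalIntegral.integral_mono_on hab intervalIntegrable_const
          (hsq.add intervalIntegrable_const) hpoint
    _ = (∫ t in a..b, g t ^ 2) + (b - a) * I := by
        simp [intervalIntegral.integral_add hsq intervalIntegrable_const]
    _ ≤ (1 + (b - a)) * I := by nlinarith

theorem mul_sq_le_two_mul_setIntegral_sq_add_sq {x : ℝ} (hx0 : 0 ≤ x) (hx1 : x ≤ 1)
    (hg : ContinuousOn g (Icc 0 x)) (hg' : ContinuousOn g' (Icc 0 x))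
    (hderiv : ∀ s ∈ Ioo 0 x, HasDerivAt g (g' s) s) :
    x * g 0 ^ 2 ≤ 2 * ∫ t in Ioo 0 x, (g t ^ 2 + g' t ^ 2) := by
  have h := mul_sq_le_integral_sq_add_sq hx0 hg hg' hderiv
  rw [sub_zero, intervalIntegral.integral_of_le hx0, integral_Ioc_eq_integral_Ioo] at h
  have hnonneg : 0 ≤ ∫ t in Ioo 0 x, (g t ^ 2 + g' t ^ 2) :=
    setIntegral_nonneg measurableSet_Ioo fun _ _ => by positivity
  nlinarith

end TraceInequality

theorem mem_closure_triangle {x t : ℝ} (ht : 0 ≤ t) (htx : t ≤ x) (hx : x ≤ 1) :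
    (x, t) ∈ closure {p : ℝ × ℝ | 0 < p.2 ∧ p.2 < p.1 ∧ p.1 < 1} := by
  have hseg : openSegment ℝ (x, t) (2 / 3, 1 / 3) ⊆
      {p : ℝ × ℝ | 0 < p.2 ∧ p.2 < p.1 ∧ p.1 < 1} := by
    rintro _ ⟨a, b, ha, hb, hab, rfl⟩
    simp only [mem_ofPred_eq, Prod.fst_add, Prod.snd_add, Prod.smul_fst, Prod.smul_snd,
      smul_eq_mul]
    refine ⟨by nlinarith, by nlinarith, by nlinarith⟩
  exact closure_mono hseg (segment_subset_closure_openSegment (left_mem_segment ℝ _ _))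

theorem isCompact_closure_triangle :
    IsCompact (closure {p : ℝ × ℝ | 0 < p.2 ∧ p.2 < p.1 ∧ p.1 < 1}) :=
  (isCompact_Icc.prod isCompact_Icc).closure_of_subset (K := Icc (0 : ℝ) 1 ×ˢ Icc 0 1)
    fun _ ⟨h0, htx, hx1⟩ => ⟨⟨by linarith, hx1.le⟩, h0.le, by linarith⟩

theorem triangle_eq_regionBetween :
    {p : ℝ × ℝ | 0 < p.2 ∧ p.2 < p.1 ∧ p.1 < 1} = regionBetween 0 id (Ioo 0 1) := by
  ext ⟨x, t⟩
  simp only [regionBetween, mem_ofPred_eq, mem_Ioo, Pi.zero_apply, id]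
  constructor
  · rintro ⟨h0, htx, hx1⟩; exact ⟨⟨h0.trans htx, hx1⟩, h0, htx⟩
  · rintro ⟨⟨_, hx1⟩, h0, htx⟩; exact ⟨h0, htx, hx1⟩

theorem stmt0 (K : Set (ℝ × ℝ))
    (hK : K = {p : ℝ × ℝ | 0 < p.2 ∧ p.2 < p.1 ∧ p.1 < 1})
    (w wt : ℝ × ℝ → ℝ)
    (hw : ContinuousOn w (closure K))
    (hwt : ContinuousOn wt (closure K))
    (hderiv : ∀ x ∈ Icc (0:ℝ) 1, ∀ t ∈ Icc 0 x,
      HasDerivWithinAt (fun s => w (x, s)) (wt (x, t)) (Icc 0 x) t) :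
    (∫ x in Ioo (0:ℝ) 1, x * (w (x, 0))^2)
      ≤ 2 * ((∫ p in K, (w p)^2) + ∫ p in K, (wt p)^2) := by
  have hcpt : IsCompact (closure K) := hK ▸ isCompact_closure_triangle
  have hw2 : IntegrableOn (fun p => w p ^ 2) K :=
    ((hw.pow 2).integrableOn_compact hcpt).mono_set subset_closure
  have hwt2 : IntegrableOn (fun p => wt p ^ 2) K :=
    ((hwt.pow 2).integrableOn_compact hcpt).mono_set subset_closure
  have hF : IntegrableOn (fun p => w p ^ 2 + wt p ^ 2) (regionBetween 0 id (Ioo 0 1))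
      (volume.prod volume) := by
    rw [← triangle_eq_regionBetween, ← hK, ← Measure.volume_eq_prod]; exact hw2.add hwt2
  have hslice : ∀ x ∈ Ioo (0 : ℝ) 1,
      x * w (x, 0) ^ 2 ≤ 2 * ∫ t in Ioo 0 x, (w (x, t) ^ 2 + wt (x, t) ^ 2) := by
    intro x ⟨hx0, hx1⟩
    have hmaps : MapsTo (fun t => (x, t)) (Icc 0 x) (closure K) := fun t ht =>
      hK ▸ mem_closure_triangle ht.1 ht.2 hx1.le
    exact mul_sq_le_two_mul_setIntegral_sq_add_sq hx0.le hx1.le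
      (hw.comp (Continuous.prodMk_right x).continuousOn hmaps)
      (hwt.comp (Continuous.prodMk_right x).continuousOn hmaps)
      fun s hs => (hderiv x ⟨hx0.le, hx1.le⟩ s (Ioo_subset_Icc_self hs)).hasDerivAt
        (Icc_mem_nhds hs.1 hs.2)
  calc ∫ x in Ioo (0 : ℝ) 1, x * w (x, 0) ^ 2
      ≤ ∫ x in Ioo (0 : ℝ) 1, 2 * ∫ t in Ioo 0 x, (w (x, t) ^ 2 + wt (x, t) ^ 2) :=
        integral_mono_of_nonneg
          (ae_restrict_of_forall_mem measurableSet_Ioo fun x hx => by have := hx.1; positivity)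
          ((integrableOn_integral_regionBetween measurable_zero measurable_id
            measurableSet_Ioo hF).const_mul 2)
          (ae_restrict_of_forall_mem measurableSet_Ioo hslice)
    _ = 2 * ∫ p in K, (w p ^ 2 + wt p ^ 2) := by
        rw [integral_const_mul, hK, triangle_eq_regionBetween, Measure.volume_eq_prod,
          setIntegral_regionBetween measurable_zero measurable_id measurableSet_Ioo hF]
        rfl
    _ = 2 * ((∫ p in K, w p ^ 2) + ∫ p in K, wt p ^ 2) := by rw [integral_add hw2 hwt2]
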